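/- For every positive integer k, every cycle of length 3k+1 and every cycle of length 3k−1 (with 3k−1 ≥ 3) is not dynamically 3-colorable. -/

import Mathlib

/-!
In a dynamic colouring of a cycle, the two neighbours of a vertex get different colours, so any
three consecutive vertices are coloured pairwise differently. With only three colours this forces
`c (v + 3) = c v`, i.e. the colouring is periodic with period `3` on `ℤ / nℤ`. When `3 ∤ n`, `3` is
a unit mod `n`, so the colouring also has period `1`, contradicting properness.
-/

open SimpleGraph

/-- A dynamic coloring: a proper coloring with `k` colors such that every vertex
with at least two neighbors has two neighbors with distinct colors. -/
def IsDynamicColoring {V : Type} (G : SimpleGraph V) {k : ℕ} (c : V → Fin k) : Prop :=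
  (∀ u v : V, G.Adj u v → c u ≠ c v) ∧
    ∀ v : V, 2 ≤ (G.neighborSet v).ncard →
      ∃ u w : V, G.Adj v u ∧ G.Adj v w ∧ c u ≠ c w

/-- A graph is dynamically `k`-colorable if it admits a dynamic `k`-coloring. -/
def DynamicColorable {V : Type} (G : SimpleGraph V) (k : ℕ) : Prop :=
  ∃ c : V → Fin k, IsDynamicColoring G c

open Function Fin.CommRing

lemma IsDynamicColoring.ne_of_neighborSet_eq_pair {V : Type} {G : SimpleGraph V} {k : ℕ}
    {c : V → Fin k} (hc : IsDynamicColoring G c) {v x y : V} (hxy : x ≠ y)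
    (hv : G.neighborSet v = {x, y}) : c x ≠ c y := by
  obtain ⟨u, w, hu, hw, hne⟩ := hc.2 v (by rw [hv, Set.ncard_pair hxy])
  rw [← mem_neighborSet, hv] at hu hw
  rcases hu with rfl | rfl <;> rcases hw with rfl | rfl
  exacts [absurd rfl hne, hne, hne.symm, absurd rfl hne]

lemma Fin.eq_of_ne_of_ne_three {a b x y : Fin 3} (hab : a ≠ b) (hxa : x ≠ a) (hxb : x ≠ b)
    (hya : y ≠ a) (hyb : y ≠ b) : x = y := by
  revert a b x y; decide

lemma Function.Periodic.fin_one_of_coprime {α : Type*} {n a : ℕ} [NeZero n] {f : Fin n → α}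
    (hf : Periodic f (a : Fin n)) (ha : a.Coprime n) : Periodic f 1 := by
  obtain ⟨m, -, hm⟩ := Nat.exists_mul_mod_eq_of_coprime 1 ha (NeZero.ne n)
  have hunit : m • (a : Fin n) = 1 := by
    rw [nsmul_eq_mul, ← Nat.cast_mul, mul_comm]
    exact Fin.ext (by rw [Fin.val_natCast, hm, Fin.val_one'])
  simpa only [hunit] using hf.nsmul m

section cycleGraph

variable {n : ℕ}

lemma cycleGraph_adj_add_one {m : ℕ} (v : Fin (m + 2)) : (cycleGraph (m + 2)).Adj v (v + 1) :=
  cycleGraph_adj.mpr (Or.inr (add_sub_cancel_left v 1))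

lemma IsDynamicColoring.cycleGraph_ne_sub_one_add_one {k : ℕ} {c : Fin (n + 3) → Fin k}
    (hc : IsDynamicColoring (cycleGraph (n + 3)) c) (v : Fin (n + 3)) :
    c (v - 1) ≠ c (v + 1) := by
  refine hc.ne_of_neighborSet_eq_pair ?_ cycleGraph_neighborSet
  rw [ne_eq, sub_eq_iff_eq_add, add_assoc, left_eq_add, one_add_one_eq_two]
  exact Fin.ne_of_val_ne (by simp [Nat.mod_eq_of_lt (show 2 < n + 3 by omega)])

lemma IsDynamicColoring.cycleGraph_periodic_three {c : Fin (n + 3) → Fin 3}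
    (hc : IsDynamicColoring (cycleGraph (n + 3)) c) : Periodic c 3 := by
  intro v
  have hadj (w : Fin (n + 3)) : c w ≠ c (w + 1) := hc.1 _ _ (cycleGraph_adj_add_one w)
  have hdist (w : Fin (n + 3)) : c w ≠ c (w + 2) := by
    simpa only [add_sub_cancel_right, add_assoc, one_add_one_eq_two]
      using hc.cycleGraph_ne_sub_one_add_one (w + 1)
  -- Pigeonhole in `Fin 3`: `c (v + 3)` and `c v` both avoid the two distinct colours
  -- `c (v + 1)` and `c (v + 2)`.
  refine Fin.eq_of_ne_of_ne_three (a := c (v + 1)) (b := c (v + 2)) ?_ ?_ ?_ ?_ ?_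
  · simpa only [add_assoc, one_add_one_eq_two] using hadj (v + 1)
  · convert (hdist (v + 1)).symm using 2; ring
  · convert (hadj (v + 2)).symm using 2; ring
  · exact hadj v
  · exact hdist v

theorem cycleGraph_not_dynamicColorable_three (h3 : ¬ 3 ∣ n + 3) :
    ¬ DynamicColorable (cycleGraph (n + 3)) 3 := by
  rintro ⟨c, hc⟩
  have hper : Periodic c ((3 : ℕ) : Fin (n + 3)) := by
    simpa only [Nat.cast_ofNat] using hc.cycleGraph_periodic_three
  have hper_one := hper.fin_one_of_coprime (Nat.prime_three.coprime_iff_not_dvd.mpr h3)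
  exact hc.1 0 1 (cycleGraph_adj_add_one 0) (by simpa using (hper_one 0).symm)

end cycleGraph

/-- For every positive integer `k`, the cycle of length `3k + 1` is not dynamically
`3`-colorable, and neither is the cycle of length `3k - 1` provided `3k - 1 ≥ 3`. -/
theorem cycles_not_dynamically_three_colorable (k : ℕ) (hk : 1 ≤ k) :
    ¬ DynamicColorable (SimpleGraph.cycleGraph (3 * k + 1)) 3 ∧
      (3 ≤ 3 * k - 1 → ¬ DynamicColorable (SimpleGraph.cycleGraph (3 * k - 1)) 3) := by
  refine ⟨?_, fun h => ?_⟩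
  · obtain ⟨n, hn⟩ : ∃ n, 3 * k + 1 = n + 3 := ⟨3 * k - 2, by omega⟩
    exact hn ▸ cycleGraph_not_dynamicColorable_three (by omega)
  · obtain ⟨n, hn⟩ : ∃ n, 3 * k - 1 = n + 3 := ⟨3 * k - 4, by omega⟩
    exact hn ▸ cycleGraph_not_dynamicColorable_three (by omega)
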